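/- arXiv:1707.08744 — 6 statements merged into one kernel-verified Lean document; each statement's English description precedes it below -/
import Mathlib

section
/- Let (W, ∼, N, V) be a conditional neighbourhood model* and let a be an agent. Define the relation R_a ⊆ W × W by: w R_a v iff for all X ⊆ W, N_a^w(X) = N_a^v(X). Then ∼_a = R_a, and consequently (W, N, V) satisfies the defining conditions of a conditional neighbourhood model with the classes [w]_a := {v ∈ W | ∀ X ⊆ W, N_a^w(X) = N_a^v(X)}. -/
/-- The knowledge cell of agent `a` at world `w`, derived from the
conditional neighbourhood function `N`:
`[w]_a = {v | ∀ X ⊆ W, N_a^w(X) = N_a^v(X)}`. -/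
def cellOf {Agt W : Type} (N : Agt → W → Set W → Set (Set W)) (a : Agt) (w : W) : Set W :=
  {v | ∀ X : Set W, N a w X = N a v X}

/-- A conditional neighbourhood model `(W, N, V)`. -/
structure CNModel (Agt Prp W : Type) : Type where
  nonempty : Nonempty W
  N : Agt → W → Set W → Set (Set W)
  V : Prp → Set W
  cond_c : ∀ a w X, ∀ Y ∈ N a w X, Y ⊆ X ∩ cellOf N a w
  cond_ec : ∀ a w (X Y : Set W), X ∩ cellOf N a w = Y ∩ cellOf N a w → N a w X = N a w Y
  cond_d : ∀ a w X, ∀ Y ∈ N a w X, (X ∩ cellOf N a w) \ Y ∉ N a w X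
  cond_sc : ∀ a w (X Y Z : Set W), Y ⊆ X ∩ cellOf N a w → Z ⊆ X ∩ cellOf N a w →
      (X ∩ cellOf N a w) \ Y ∉ N a w X → Y ⊂ Z → Z ∈ N a w X

/-- A conditional neighbourhood model* `(W, ∼, N, V)`: the epistemic
equivalence relations `∼_a` are primitive, and `N` satisfies (c), (a), (d),
(sc), (ec) with respect to the `∼_a`-classes `[w]_a = {v | w ∼_a v}`. -/
structure CNModelStar (Agt Prp W : Type) : Type where
  nonempty : Nonempty W
  sim : Agt → W → W → Prop
  equiv : ∀ a, Equivalence (sim a)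
  N : Agt → W → Set W → Set (Set W)
  V : Prp → Set W
  cond_c : ∀ a w X, ∀ Y ∈ N a w X, Y ⊆ X ∩ {v | sim a w v}
  cond_a : ∀ a w X, ∀ v, sim a w v → N a w X = N a v X
  cond_d : ∀ a w X, ∀ Y ∈ N a w X, (X ∩ {v | sim a w v}) \ Y ∉ N a w X
  cond_sc : ∀ a w (X Y Z : Set W), Y ⊆ X ∩ {v | sim a w v} → Z ⊆ X ∩ {v | sim a w v} →
      (X ∩ {v | sim a w v}) \ Y ∉ N a w X → Y ⊂ Z → Z ∈ N a w X
  cond_ec : ∀ a w (X Y : Set W), X ∩ {v | sim a w v} = Y ∩ {v | sim a w v} →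
      N a w X = N a w Y

/-!
By (sc) applied to `Y = ∅` and `Z = [w]_a`, the cell `[w]_a` is a neighbourhood of itself at `w`.
If `N_a^w = N_a^v`, it is then also one at `v`, and (c) at `v` puts `w` in `[v]_a`. Conversely (a)
gives `N_a^w = N_a^v` whenever `w ∼_a v`. So the derived cells are the `∼_a`-classes, and the
conditions of the starred model transfer verbatim.
-/

namespace CNModelStar

variable {Agt Prp W : Type} (M : CNModelStar Agt Prp W)

theorem cell_mem_N_cell (a : Agt) (w : W) : {v | M.sim a w v} ∈ M.N a w {v | M.sim a w v} := by
  by_contra h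
  have hw : w ∈ {v | M.sim a w v} := (M.equiv a).refl w
  refine h (M.cond_sc a w _ ∅ _ (Set.empty_subset _) (fun _ hx => ⟨hx, hx⟩) ?_
    (Set.empty_ssubset.mpr ⟨w, hw⟩))
  rwa [Set.inter_self, Set.sdiff_empty]

theorem sim_iff_N_eq (a : Agt) (w v : W) :
    M.sim a w v ↔ ∀ X : Set W, M.N a w X = M.N a v X := by
  refine ⟨fun h X => M.cond_a a w X v h, fun h => ?_⟩
  have hmem : {u | M.sim a w u} ∈ M.N a v {u | M.sim a w u} := h _ ▸ M.cell_mem_N_cell a w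
  exact (M.equiv a).symm (M.cond_c a v _ _ hmem ((M.equiv a).refl w)).2

theorem cellOf_N_eq (a : Agt) (w : W) : cellOf M.N a w = {v | M.sim a w v} :=
  Set.ext fun v => (M.sim_iff_N_eq a w v).symm

def toCNModel : CNModel Agt Prp W where
  nonempty := M.nonempty
  N := M.N
  V := M.V
  cond_c a w := M.cellOf_N_eq a w ▸ M.cond_c a w
  cond_ec a w := M.cellOf_N_eq a w ▸ M.cond_ec a w
  cond_d a w := M.cellOf_N_eq a w ▸ M.cond_d a w
  cond_sc a w := M.cellOf_N_eq a w ▸ M.cond_sc a w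

end CNModelStar

/-- In a conditional neighbourhood model* the primitive equivalence `∼_a`
coincides with the relation `R_a` defined by `w R_a v iff ∀ X, N_a^w(X) = N_a^v(X)`,
and consequently `(W, N, V)` is a conditional neighbourhood model (whose cells
`[w]_a` are defined from `N`). -/
theorem star_eq_derived {Agt Prp W : Type} (M : CNModelStar Agt Prp W) :
    (∀ (a : Agt) (w v : W), M.sim a w v ↔ ∀ X : Set W, M.N a w X = M.N a v X) ∧
    ∃ M' : CNModel Agt Prp W, M'.N = M.N ∧ M'.V = M.V :=
  ⟨M.sim_iff_N_eq, M.toCNModel, rfl, rfl⟩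
end

section
/- Let M = (W, N, V) be a conditional neighbourhood model. Then for every agent a, world w ∈ W, and sets X, S ⊆ W: there exists Y ∈ N_a^w(X) with Y ⊆ S if and only if S ∩ X ∩ [w]_a ∈ N_a^w(X). In particular, M,w ⊨ B_a(φ,ψ) iff {v ∈ ⟦φ⟧_M ∩ [w]_a | M,v ⊨ ψ} ∈ N_a^w(⟦φ⟧_M). -/
/-- The language L_CN: `φ ::= ⊤ | p | ¬φ | (φ∧φ) | B_a(φ,φ)`. -/
inductive CNForm (Agt Prp : Type) : Type
  | top : CNForm Agt Prp
  | atom : Prp → CNForm Agt Prp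
  | neg : CNForm Agt Prp → CNForm Agt Prp
  | and : CNForm Agt Prp → CNForm Agt Prp → CNForm Agt Prp
  | bel : Agt → CNForm Agt Prp → CNForm Agt Prp → CNForm Agt Prp

/-- Truth of an L_CN formula at a world of a conditional neighbourhood model.
`B_a(φ,ψ)` holds at `w` iff some `Y ∈ N_a^w(⟦φ⟧)` satisfies `Y ⊆ ⟦ψ⟧`. -/
def CNModel.truth {Agt Prp W : Type} (M : CNModel Agt Prp W) : CNForm Agt Prp → W → Prop
  | .top, _ => True
  | .atom p, w => w ∈ M.V p
  | .neg φ, w => ¬ M.truth φ w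
  | .and φ ψ, w => M.truth φ w ∧ M.truth ψ w
  | .bel a φ ψ, w => ∃ Y ∈ M.N a w {v | M.truth φ v}, Y ⊆ {v | M.truth ψ v}

namespace CNModel

variable {Agt Prp W : Type} (M : CNModel Agt Prp W) {a : Agt} {w : W}

/-- By `(d)` the complement of a member is not a member, which is the premise `(sc)` needs. -/
theorem mem_of_subset_of_mem {X Y Z : Set W} (hY : Y ∈ M.N a w X) (hYZ : Y ⊆ Z)
    (hZ : Z ⊆ X ∩ cellOf M.N a w) : Z ∈ M.N a w X := by
  rcases hYZ.eq_or_ssubset with rfl | hYZ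
  · exact hY
  · exact M.cond_sc a w X Y Z (M.cond_c a w X Y hY) hZ (M.cond_d a w X Y hY) hYZ

theorem exists_mem_subset_iff {X S : Set W} :
    (∃ Y ∈ M.N a w X, Y ⊆ S) ↔ S ∩ X ∩ cellOf M.N a w ∈ M.N a w X := by
  refine ⟨fun ⟨Y, hY, hYS⟩ => M.mem_of_subset_of_mem hY ?_ ?_, fun h => ⟨_, h, fun v hv => hv.1.1⟩⟩
  · rw [Set.inter_assoc]
    exact Set.subset_inter hYS (M.cond_c a w X Y hY)
  · exact Set.inter_subset_inter_left _ Set.inter_subset_right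

theorem truth_bel_iff (φ ψ : CNForm Agt Prp) :
    M.truth (.bel a φ ψ) w ↔
      {v | (v ∈ {u | M.truth φ u} ∩ cellOf M.N a w) ∧ M.truth ψ v} ∈ M.N a w {v | M.truth φ v} := by
  have hset : {v | (v ∈ {u | M.truth φ u} ∩ cellOf M.N a w) ∧ M.truth ψ v} =
      {v | M.truth ψ v} ∩ {v | M.truth φ v} ∩ cellOf M.N a w := by
    ext v
    simp only [Set.mem_inter_iff, Set.mem_ofPred]
    tauto
  rw [hset]
  exact M.exists_mem_subset_iff

end CNModel

/-- (i) `∃ Y ∈ N_a^w(X), Y ⊆ S` iff `S ∩ X ∩ [w]_a ∈ N_a^w(X)`;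
(ii) in particular, `M,w ⊨ B_a(φ,ψ)` iff `{v ∈ ⟦φ⟧ ∩ [w]_a | M,v ⊨ ψ} ∈ N_a^w(⟦φ⟧)`. -/
theorem cn_bel_characterization {Agt Prp W : Type} (M : CNModel Agt Prp W)
    (a : Agt) (w : W) :
    (∀ X S : Set W, (∃ Y ∈ M.N a w X, Y ⊆ S) ↔ S ∩ X ∩ cellOf M.N a w ∈ M.N a w X) ∧
    (∀ φ ψ : CNForm Agt Prp,
      M.truth (.bel a φ ψ) w ↔
        {v | (v ∈ {u | M.truth φ u} ∩ cellOf M.N a w) ∧ M.truth ψ v}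
          ∈ M.N a w {v | M.truth φ v}) :=
  ⟨fun _ _ => M.exists_mem_subset_iff, M.truth_bel_iff⟩
end

section
/- Soundness of the CN calculus for conditional neighbourhood models: every formula φ of L_CN derivable in the CN calculus is true at every world of every conditional neighbourhood model. -/
namespace CNForm

/-- Material implication, defined from `¬` and `∧`. -/
def imp {Agt Prp : Type} (φ ψ : CNForm Agt Prp) : CNForm Agt Prp := .neg (.and φ (.neg ψ))

/-- Disjunction, defined from `¬` and `∧`. -/
def or {Agt Prp : Type} (φ ψ : CNForm Agt Prp) : CNForm Agt Prp := .neg (.and (.neg φ) (.neg ψ))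

/-- Biconditional. -/
def iff {Agt Prp : Type} (φ ψ : CNForm Agt Prp) : CNForm Agt Prp := .and (imp φ ψ) (imp ψ φ)

/-- Knowledge: `K_a φ := ¬B_a(¬φ,⊤)`. -/
def K {Agt Prp : Type} (a : Agt) (φ : CNForm Agt Prp) : CNForm Agt Prp := .neg (.bel a (.neg φ) .top)

end CNForm

/-- Boolean evaluation of a formula under an assignment `v` of truth values to
the "atomic" formulas (proposition letters and belief formulas), interpreting
`⊤`, `¬`, `∧` classically. -/
def boolEval {Agt Prp : Type} (v : CNForm Agt Prp → Prop) : CNForm Agt Prp → Prop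
  | .top => True
  | .atom p => v (.atom p)
  | .neg φ => ¬ boolEval v φ
  | .and φ ψ => boolEval v φ ∧ boolEval v ψ
  | .bel a φ ψ => v (.bel a φ ψ)

/-- `φ` is an instance of a propositional tautology: it evaluates to true under
every assignment of truth values to proposition letters and belief formulas. -/
def CNTaut {Agt Prp : Type} (φ : CNForm Agt Prp) : Prop := ∀ v, boolEval v φ

/-- The CN calculus. -/
inductive CNDeriv {Agt Prp : Type} : CNForm Agt Prp → Prop
  | taut {φ : CNForm Agt Prp} : CNTaut φ → CNDeriv φ
  | distK (a : Agt) (φ ψ : CNForm Agt Prp) :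
      CNDeriv ((CNForm.K a (φ.imp ψ)).imp ((CNForm.K a φ).imp (CNForm.K a ψ)))
  | tAx (a : Agt) (φ : CNForm Agt Prp) : CNDeriv ((CNForm.K a φ).imp φ)
  | fiveB (a : Agt) (φ ψ : CNForm Agt Prp) :
      CNDeriv ((CNForm.bel a φ ψ).imp (CNForm.K a (.bel a φ ψ)))
  | fourB (a : Agt) (φ ψ : CNForm Agt Prp) :
      CNDeriv ((CNForm.neg (.bel a φ ψ)).imp (CNForm.K a (.neg (.bel a φ ψ))))
  | dAx (a : Agt) (φ ψ : CNForm Agt Prp) :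
      CNDeriv ((CNForm.bel a φ ψ).imp (.neg (.bel a φ (.neg ψ))))
  | ecAx (a : Agt) (φ ψ χ : CNForm Agt Prp) :
      CNDeriv ((CNForm.K a (φ.iff ψ)).imp ((CNForm.bel a φ χ).imp (.bel a ψ χ)))
  | mAx (a : Agt) (φ ψ χ : CNForm Agt Prp) :
      CNDeriv ((CNForm.K a (φ.imp ψ)).imp ((CNForm.bel a χ φ).imp (.bel a χ ψ)))
  | cAx (a : Agt) (φ ψ : CNForm Agt Prp) :
      CNDeriv ((CNForm.bel a φ ψ).imp (.bel a φ (.and φ ψ)))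
  | scAx (a : Agt) (φ ψ χ : CNForm Agt Prp) :
      CNDeriv (((CNForm.neg (.bel a χ (.neg φ))).and
          (.neg (CNForm.K a (.neg (χ.and ((CNForm.neg φ).and ψ)))))).imp
        (.bel a χ (φ.or ψ)))
  | mp {φ ψ : CNForm Agt Prp} : CNDeriv (φ.imp ψ) → CNDeriv φ → CNDeriv ψ
  | necK {φ : CNForm Agt Prp} (a : Agt) : CNDeriv φ → CNDeriv (CNForm.K a φ)

/-! Each axiom is one of the frame conditions read through the truth clause of `B_a`:
(EC), (C), (D), (SC) come from (ec), (c), (d), (sc), and (M) from (c), since neighbourhoods lie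
inside `[w]_a`. The one less direct step is that `K_a φ = ¬B_a(¬φ,⊤)` means "`φ` holds throughout
`[w]_a`": by (sc) and (d), `N_a^w(X)` is nonempty exactly when `X` meets `[w]_a`. Since
`N_a^v = N_a^w` for `v ∈ [w]_a`, belief formulas are constant on cells, which gives (5B) and (4B)
and, with `w ∈ [w]_a`, (T). -/

namespace CNModel

variable {Agt Prp W : Type} (M : CNModel Agt Prp W)

lemma mem_cellOf_self (a : Agt) (w : W) : w ∈ cellOf M.N a w := fun _ => rfl

lemma mem_N_of_subset {a : Agt} {w : W} {X Y Z : Set W} (hY : Y ∈ M.N a w X)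
    (hYZ : Y ⊆ Z) (hZ : Z ⊆ X ∩ cellOf M.N a w) : Z ∈ M.N a w X := by
  rcases hYZ.ssubset_or_eq with h | rfl
  · exact M.cond_sc a w X Y Z (M.cond_c a w X Y hY) hZ (M.cond_d a w X Y hY) h
  · exact hY

lemma inter_nonempty_of_mem_N {a : Agt} {w : W} {X Y Y' : Set W} (hY : Y ∈ M.N a w X)
    (hY' : Y' ∈ M.N a w X) : (Y ∩ Y').Nonempty := by
  by_contra hdisj
  have hsub : Y' ⊆ (X ∩ cellOf M.N a w) \ Y := fun v hv =>
    ⟨M.cond_c a w X Y' hY' hv, fun hvY => hdisj ⟨v, hvY, hv⟩⟩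
  exact M.cond_d a w X Y hY (M.mem_N_of_subset hY' hsub Set.sdiff_subset)

lemma exists_mem_N_iff (a : Agt) (w : W) (X : Set W) :
    (∃ Y, Y ∈ M.N a w X) ↔ (X ∩ cellOf M.N a w).Nonempty := by
  constructor
  · rintro ⟨Y, hY⟩
    obtain ⟨v, hv, -⟩ := M.inter_nonempty_of_mem_N hY hY
    exact ⟨v, M.cond_c a w X Y hY hv⟩
  · rintro ⟨v, hv⟩
    by_contra! hnone
    exact hnone _ (M.cond_sc a w X ∅ _ (Set.empty_subset _) subset_rfl (hnone _)
      (Set.empty_ssubset.2 ⟨v, hv⟩))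

lemma truth_imp (φ ψ : CNForm Agt Prp) (w : W) :
    M.truth (φ.imp ψ) w ↔ (M.truth φ w → M.truth ψ w) := by
  simp only [CNForm.imp, CNModel.truth]; tauto

lemma truth_iff (φ ψ : CNForm Agt Prp) (w : W) :
    M.truth (φ.iff ψ) w ↔ (M.truth φ w ↔ M.truth ψ w) := by
  simp only [CNForm.iff, truth_imp, CNModel.truth]; tauto

lemma truth_or (φ ψ : CNForm Agt Prp) (w : W) :
    M.truth (φ.or ψ) w ↔ (M.truth φ w ∨ M.truth ψ w) := by
  simp only [CNForm.or, CNModel.truth]; tauto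

lemma truth_K (a : Agt) (φ : CNForm Agt Prp) (w : W) :
    M.truth (CNForm.K a φ) w ↔ ∀ v ∈ cellOf M.N a w, M.truth φ v := by
  simp only [CNForm.K, CNModel.truth, Set.subset_def, Set.mem_ofPred_eq, implies_true,
    and_true, M.exists_mem_N_iff, Set.not_nonempty_iff_eq_empty,
    Set.eq_empty_iff_forall_notMem, Set.mem_inter_iff, not_and, not_imp_not]

lemma truth_bel_of_mem_cellOf {a : Agt} {w v : W} (hv : v ∈ cellOf M.N a w)
    (φ ψ : CNForm Agt Prp) : M.truth (.bel a φ ψ) v ↔ M.truth (.bel a φ ψ) w := by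
  simp only [CNModel.truth]
  rw [← hv]

lemma truth_bel_congr_left {a : Agt} {w : W} {φ ψ : CNForm Agt Prp}
    (h : ∀ v ∈ cellOf M.N a w, M.truth φ v ↔ M.truth ψ v) (χ : CNForm Agt Prp) :
    M.truth (.bel a φ χ) w ↔ M.truth (.bel a ψ χ) w := by
  have hcell : {v | M.truth φ v} ∩ cellOf M.N a w = {v | M.truth ψ v} ∩ cellOf M.N a w := by
    ext v
    exact and_congr_left (h v)
  simp only [CNModel.truth, M.cond_ec a w _ _ hcell]

lemma truth_of_taut {φ : CNForm Agt Prp} (hφ : CNTaut φ) (w : W) : M.truth φ w := by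
  suffices h : ∀ ψ, boolEval (M.truth · w) ψ ↔ M.truth ψ w from (h φ).1 (hφ _)
  intro ψ
  induction ψ with
  | neg ψ ih => exact not_congr ih
  | and ψ χ ih₁ ih₂ => exact and_congr ih₁ ih₂
  | _ => rfl

variable (a : Agt) (φ ψ χ : CNForm Agt Prp) (w : W)

lemma truth_distK :
    M.truth ((CNForm.K a (φ.imp ψ)).imp ((CNForm.K a φ).imp (CNForm.K a ψ))) w := by
  simp only [truth_imp, truth_K]
  exact fun hφψ hφ v hv => hφψ v hv (hφ v hv)

lemma truth_tAx : M.truth ((CNForm.K a φ).imp φ) w := by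
  rw [truth_imp, truth_K]
  exact fun hφ => hφ w (M.mem_cellOf_self a w)

lemma truth_fiveB : M.truth ((CNForm.bel a φ ψ).imp (CNForm.K a (.bel a φ ψ))) w := by
  rw [truth_imp, truth_K]
  exact fun hw v hv => (M.truth_bel_of_mem_cellOf hv φ ψ).2 hw

lemma truth_fourB :
    M.truth ((CNForm.neg (.bel a φ ψ)).imp (CNForm.K a (.neg (.bel a φ ψ)))) w := by
  rw [truth_imp, truth_K]
  exact fun hw v hv => (M.truth_bel_of_mem_cellOf hv φ ψ).not.2 hw

lemma truth_dAx : M.truth ((CNForm.bel a φ ψ).imp (.neg (.bel a φ (.neg ψ)))) w := by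
  rw [truth_imp]
  rintro ⟨Y, hY, hYψ⟩ ⟨Y', hY', hY'ψ⟩
  obtain ⟨v, hvY, hvY'⟩ := M.inter_nonempty_of_mem_N hY hY'
  exact hY'ψ hvY' (hYψ hvY)

lemma truth_ecAx :
    M.truth ((CNForm.K a (φ.iff ψ)).imp ((CNForm.bel a φ χ).imp (.bel a ψ χ))) w := by
  simp only [truth_imp, truth_K, truth_iff]
  exact fun h => (M.truth_bel_congr_left h χ).1

lemma truth_mAx :
    M.truth ((CNForm.K a (φ.imp ψ)).imp ((CNForm.bel a χ φ).imp (.bel a χ ψ))) w := by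
  simp only [truth_imp, truth_K]
  rintro h ⟨Y, hY, hYφ⟩
  exact ⟨Y, hY, fun v hv => h v (M.cond_c a w _ Y hY hv).2 (hYφ hv)⟩

lemma truth_cAx : M.truth ((CNForm.bel a φ ψ).imp (.bel a φ (.and φ ψ))) w := by
  rw [truth_imp]
  rintro ⟨Y, hY, hYψ⟩
  exact ⟨Y, hY, fun v hv => ⟨(M.cond_c a w _ Y hY hv).1, hYψ hv⟩⟩

lemma truth_scAx :
    M.truth (((CNForm.neg (.bel a χ (.neg φ))).and
        (.neg (CNForm.K a (.neg (χ.and ((CNForm.neg φ).and ψ)))))).imp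
      (.bel a χ (φ.or ψ))) w := by
  rw [truth_imp]
  rintro ⟨hnot, hK⟩
  obtain ⟨v, hvc, hv⟩ := not_forall₂.1 ((M.truth_K a _ w).not.1 hK)
  simp only [CNModel.truth, not_not] at hv
  obtain ⟨hvχ, hvφ, hvψ⟩ := hv
  set X := {u | M.truth χ u} ∩ cellOf M.N a w
  -- (sc) with `Y = X ∩ ⟦φ⟧ ⊊ Z = X ∩ ⟦φ ∨ ψ⟧`, the witness `v` of `χ ∧ ¬φ ∧ ψ` making it strict
  have hdiff : X \ (X ∩ {u | M.truth φ u}) ∉ M.N a w {u | M.truth χ u} := fun hmem =>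
    hnot ⟨_, hmem, fun u hu hφ => hu.2 ⟨hu.1, hφ⟩⟩
  have hstrict : X ∩ {u | M.truth φ u} ⊂ X ∩ {u | M.truth (φ.or ψ) u} :=
    Set.ssubset_iff_exists.2 ⟨fun u hu => ⟨hu.1, (M.truth_or φ ψ u).2 (Or.inl hu.2)⟩,
      v, ⟨⟨hvχ, hvc⟩, (M.truth_or φ ψ v).2 (Or.inr hvψ)⟩, fun hv => hvφ hv.2⟩
  exact ⟨_, M.cond_sc a w _ _ _ Set.inter_subset_left Set.inter_subset_left hdiff hstrict,
    fun u hu => hu.2⟩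

end CNModel

theorem cn_soundness_general {Agt Prp : Type} (φ : CNForm Agt Prp)
    (h : CNDeriv φ) :
    ∀ (W : Type) (M : CNModel Agt Prp W) (w : W), M.truth φ w := by
  intro W M
  induction h with
  | taut hφ => exact M.truth_of_taut hφ
  | distK a φ ψ => exact M.truth_distK a φ ψ
  | tAx a φ => exact M.truth_tAx a φ
  | fiveB a φ ψ => exact M.truth_fiveB a φ ψ
  | fourB a φ ψ => exact M.truth_fourB a φ ψ
  | dAx a φ ψ => exact M.truth_dAx a φ ψ
  | ecAx a φ ψ χ => exact M.truth_ecAx a φ ψ χ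
  | mAx a φ ψ χ => exact M.truth_mAx a φ ψ χ
  | cAx a φ ψ => exact M.truth_cAx a φ ψ
  | scAx a φ ψ χ => exact M.truth_scAx a φ ψ χ
  | mp _ _ ihImp ih => exact fun w => (M.truth_imp _ _ w).1 (ihImp w) (ih w)
  | necK a _ ih => exact fun w => (M.truth_K a _ w).2 fun v _ => ih v

/-- Soundness of the CN calculus for conditional neighbourhood models. -/
theorem cn_soundness {Agt Prp : Type} [Finite Agt] (φ : CNForm Agt Prp)
    (h : CNDeriv φ) :
    ∀ (W : Type) (M : CNModel Agt Prp W) (w : W), M.truth φ w :=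
  cn_soundness_general φ h
end

section
/- Soundness of the public announcement reduction axiom: for every conditional neighbourhood model M, world w, agent a, and formulas φ, ψ, χ of L_PC, the equivalence [φ]B_a(ψ,χ) ↔ (φ → B_a(φ∧[φ]ψ, [φ]χ)) is true at w. -/
/-- The language L_PC: `φ ::= ⊤ | p | ¬φ | (φ∧φ) | B_a(φ,φ) | [φ]φ`. -/
inductive PCForm (Agt Prp : Type) : Type
  | top : PCForm Agt Prp
  | atom : Prp → PCForm Agt Prp
  | neg : PCForm Agt Prp → PCForm Agt Prp
  | and : PCForm Agt Prp → PCForm Agt Prp → PCForm Agt Prp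
  | bel : Agt → PCForm Agt Prp → PCForm Agt Prp → PCForm Agt Prp
  | ann : PCForm Agt Prp → PCForm Agt Prp → PCForm Agt Prp

/-- Material implication in L_PC. -/
def PCForm.imp {Agt Prp : Type} (φ ψ : PCForm Agt Prp) : PCForm Agt Prp :=
  .neg (.and φ (.neg ψ))

/-- Truth of an L_PC formula, relative to a restriction set `R ⊆ W` recording
the worlds surviving the announcements made so far (so truth in `M` itself is
truth relative to `R = univ`, and the updated model `M^φ` is represented by
restricting to `R ∩ ⟦φ⟧`).  In the restricted model the worlds are `R`, the
valuation is `V ∩ R`, the cells are `[w]_a ∩ R`, and the neighbourhood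
function is unchanged, so `B_a(φ,ψ)` holds at `w` iff some
`Y ∈ N_a^w(⟦φ⟧_{M^R})` satisfies `Y ⊆ ⟦ψ⟧_{M^R}`, where `⟦χ⟧_{M^R} = {v ∈ R | χ}`. -/
def pctruth {Agt Prp W : Type} (M : CNModel Agt Prp W) :
    PCForm Agt Prp → Set W → W → Prop
  | .top, _, _ => True
  | .atom p, _, w => w ∈ M.V p
  | .neg φ, R, w => ¬ pctruth M φ R w
  | .and φ ψ, R, w => pctruth M φ R w ∧ pctruth M ψ R w
  | .bel a φ ψ, R, w =>
      ∃ Y ∈ M.N a w {v ∈ R | pctruth M φ R v}, Y ⊆ {v ∈ R | pctruth M ψ R v}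
  | .ann φ ψ, R, w =>
      pctruth M φ R w → pctruth M ψ {v ∈ R | pctruth M φ R v} w

/-! The announcement `[φ]` replaces the restriction set `R` by `⟦φ⟧_R`, while the
neighbourhood function stays the same. Relative to `R`, the set `⟦φ ∧ [φ]ψ⟧_R` is literally
`⟦ψ⟧_{⟦φ⟧_R}`, so both sides of the axiom quantify over the same neighbourhoods `Y`; and since
every such `Y` lies inside `⟦φ⟧_R` by condition (c), `Y ⊆ ⟦[φ]χ⟧_R` holds iff
`Y ⊆ ⟦χ⟧_{⟦φ⟧_R}`. -/

namespace CNModel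

variable {Agt Prp W : Type} (M : CNModel Agt Prp W)

theorem subset_of_mem_N {a : Agt} {w : W} {X Y : Set W} (hY : Y ∈ M.N a w X) : Y ⊆ X :=
  fun _ hv => (M.cond_c a w X Y hY hv).1

def truthSet (φ : PCForm Agt Prp) (R : Set W) : Set W :=
  {v ∈ R | pctruth M φ R v}

variable {M}

theorem truthSet_subset (φ : PCForm Agt Prp) (R : Set W) : M.truthSet φ R ⊆ R :=
  Set.sep_subset _ _

theorem pctruth_bel {a : Agt} {φ ψ : PCForm Agt Prp} {R : Set W} {w : W} :
    pctruth M (.bel a φ ψ) R w ↔ ∃ Y ∈ M.N a w (M.truthSet φ R), Y ⊆ M.truthSet ψ R :=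
  Iff.rfl

theorem pctruth_ann {φ ψ : PCForm Agt Prp} {R : Set W} {w : W} :
    pctruth M (.ann φ ψ) R w ↔ (pctruth M φ R w → pctruth M ψ (M.truthSet φ R) w) :=
  Iff.rfl

theorem pctruth_imp {φ ψ : PCForm Agt Prp} {R : Set W} {w : W} :
    pctruth M (φ.imp ψ) R w ↔ (pctruth M φ R w → pctruth M ψ R w) := by
  simp only [PCForm.imp, pctruth, not_and, not_not]

theorem truthSet_and_ann (φ ψ : PCForm Agt Prp) (R : Set W) :
    M.truthSet (.and φ (.ann φ ψ)) R = M.truthSet ψ (M.truthSet φ R) := by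
  ext v
  simp only [truthSet, pctruth, Set.mem_ofPred_eq]
  tauto

theorem truthSet_ann_inter (φ ψ : PCForm Agt Prp) (R : Set W) :
    M.truthSet (.ann φ ψ) R ∩ M.truthSet φ R = M.truthSet ψ (M.truthSet φ R) := by
  ext v
  simp only [truthSet, pctruth, Set.mem_inter_iff, Set.mem_ofPred_eq]
  tauto

theorem pctruth_ann_bel_iff (a : Agt) (φ ψ χ : PCForm Agt Prp) (R : Set W) (w : W) :
    pctruth M (.ann φ (.bel a ψ χ)) R w ↔
      pctruth M (PCForm.imp φ (.bel a (.and φ (.ann φ ψ)) (.ann φ χ))) R w := by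
  rw [pctruth_ann, pctruth_imp, pctruth_bel, pctruth_bel, truthSet_and_ann]
  refine imp_congr_right fun _ => exists_congr fun Y => and_congr_right fun hY => ?_
  have hYφ : Y ⊆ M.truthSet φ R := (M.subset_of_mem_N hY).trans (truthSet_subset _ _)
  rw [← truthSet_ann_inter, Set.subset_inter_iff, and_iff_left hYφ]

end CNModel

/-- Soundness of the public announcement (deleting points) reduction axiom:
`[φ]B_a(ψ,χ) ↔ (φ → B_a(φ∧[φ]ψ, [φ]χ))` is true at every world of every
conditional neighbourhood model. -/
theorem pc_reduction_sound {Agt Prp W : Type} (M : CNModel Agt Prp W) (w : W)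
    (a : Agt) (φ ψ χ : PCForm Agt Prp) :
    pctruth M (.ann φ (.bel a ψ χ)) Set.univ w ↔
      pctruth M (PCForm.imp φ (.bel a (.and φ (.ann φ ψ)) (.ann φ χ))) Set.univ w :=
  CNModel.pctruth_ann_bel_iff a φ ψ χ Set.univ w
end

section
/- Soundness of the truth-value announcement reduction axiom: for every conditional neighbourhood model M, world w, agent a, and formulas φ, ψ, χ of L_PC±, the equivalence [±φ]B_a(ψ,χ) ↔ ((φ → B_a(φ∧[±φ]ψ, [±φ]χ)) ∧ (¬φ → B_a(¬φ∧[±φ]ψ, [±φ]χ))) is true at w. -/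
/-- The language L_PC±: `φ ::= ⊤ | p | ¬φ | (φ∧φ) | B_a(φ,φ) | [±φ]φ`. -/
inductive PMForm (Agt Prp : Type) : Type
  | top : PMForm Agt Prp
  | atom : Prp → PMForm Agt Prp
  | neg : PMForm Agt Prp → PMForm Agt Prp
  | and : PMForm Agt Prp → PMForm Agt Prp → PMForm Agt Prp
  | bel : Agt → PMForm Agt Prp → PMForm Agt Prp → PMForm Agt Prp
  | ann : PMForm Agt Prp → PMForm Agt Prp → PMForm Agt Prp

/-- Material implication in L_PC±. -/
def PMForm.imp {Agt Prp : Type} (φ ψ : PMForm Agt Prp) : PMForm Agt Prp :=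
  .neg (.and φ (.neg ψ))

/-- Truth of an L_PC± formula with respect to a neighbourhood function `N` and
a valuation `V`.  The truth-value announcement `[±φ]ψ` is evaluated in the
updated model `(W, N^{±φ}, V)`, where `N^{±φ}_a^u(X) := N_a^u(X ∩ [u]^{±φ}_a)`
and `[u]^{±φ}_a := {v ∈ [u]_a | v ⊨ φ iff u ⊨ φ}` (i.e. `[u]_a ∩ ⟦φ⟧` if
`u ⊨ φ`, and `[u]_a \ ⟦φ⟧` otherwise). -/
def pmtruth {Agt Prp W : Type} :
    (Agt → W → Set W → Set (Set W)) → (Prp → Set W) → PMForm Agt Prp → W → Prop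
  | _, _, .top, _ => True
  | _, V, .atom p, w => w ∈ V p
  | N, V, .neg φ, w => ¬ pmtruth N V φ w
  | N, V, .and φ ψ, w => pmtruth N V φ w ∧ pmtruth N V ψ w
  | N, V, .bel a φ ψ, w =>
      ∃ Y ∈ N a w {v | pmtruth N V φ v}, Y ⊆ {v | pmtruth N V ψ v}
  | N, V, .ann φ ψ, w =>
      pmtruth
        (fun a u X =>
          N a u (X ∩ {v | v ∈ cellOf N a u ∧ (pmtruth N V φ v ↔ pmtruth N V φ u)}))
        V ψ w
  termination_by _ _ φ _ => sizeOf φ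

/-- By (ec), intersecting with the cell `[w]_a` inside `N_a^w` is redundant, so the
announcement only restricts the condition to the truth-value class of `φ` at `w`. -/
theorem CNModel.pmtruth_ann_bel_iff {Agt Prp W : Type} (M : CNModel Agt Prp W) (w : W)
    (a : Agt) (φ ψ χ : PMForm Agt Prp) :
    pmtruth M.N M.V (.ann φ (.bel a ψ χ)) w ↔
      ∃ Y ∈ M.N a w
          {v | (pmtruth M.N M.V φ v ↔ pmtruth M.N M.V φ w) ∧ pmtruth M.N M.V (.ann φ ψ) v},
        Y ⊆ {v | pmtruth M.N M.V (.ann φ χ) v} := by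
  simp only [pmtruth]
  refine exists_congr fun Y =>
    and_congr_left' <| iff_of_eq <| congrArg (Y ∈ ·) <| M.cond_ec _ _ _ _ ?_
  ext v
  simp only [Set.mem_inter_iff, Set.mem_ofPred_eq]
  tauto

/-- Soundness of the truth-value announcement reduction axiom:
`[±φ]B_a(ψ,χ) ↔ ((φ → B_a(φ∧[±φ]ψ, [±φ]χ)) ∧ (¬φ → B_a(¬φ∧[±φ]ψ, [±φ]χ)))`
is true at every world of every conditional neighbourhood model. -/
theorem pm_reduction_sound {Agt Prp W : Type} (M : CNModel Agt Prp W) (w : W)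
    (a : Agt) (φ ψ χ : PMForm Agt Prp) :
    pmtruth M.N M.V (.ann φ (.bel a ψ χ)) w ↔
      pmtruth M.N M.V
        (PMForm.and
          (PMForm.imp φ (.bel a (.and φ (.ann φ ψ)) (.ann φ χ)))
          (PMForm.imp (.neg φ) (.bel a (.and (.neg φ) (.ann φ ψ)) (.ann φ χ)))) w := by
  rw [M.pmtruth_ann_bel_iff]
  by_cases hφ : pmtruth M.N M.V φ w <;> simp [pmtruth, PMForm.imp, hφ]
end

section
/- L_QP is strictly more expressive than L_CN on comparison models: let W = 𝒫({p,q}), V(r) := {w ∈ W | r ∈ w} for r ∈ {p,q}, and let N1 = (W, ⪰_1, V) and N2 = (W, ⪰_2, V) be the comparison models with ⪰_1 = {({{p},{p,q}}, {{q},{p,q}}), ({{p}},{{q}})} and ⪰_2 = {({{p}},{{q}})}. Then (i) for every L_CN formula φ and every w ∈ W, N1,w ⊨_1 φ iff N2,w ⊨_1 φ; and (ii) the L_QP formula p ≽ q is true at every world of N1 under ⊨_2 but false at every world of N2 under ⊨_2. -/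
/-! The belief operator `B(α,β)` only ever compares the disjoint sets `⟦α∧β⟧` and `⟦α∧¬β⟧`,
so two comparison relations that agree on disjoint pairs make the same L_CN formulas true.
`⪰_1` and `⪰_2` differ only at `(⟦p⟧, ⟦q⟧)`, which is not disjoint since both contain `{p,q}`;
yet that is exactly the pair `p ≽ q` inspects. -/

/-- The single-agent language L_CN: `φ ::= ⊤ | p | ¬φ | (φ∧φ) | B(φ,φ)`,
with proposition letters `p, q` rendered as `0, 1 : Fin 2`. -/
inductive CForm : Type
  | top : CForm
  | atom : Fin 2 → CForm
  | neg : CForm → CForm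
  | and : CForm → CForm → CForm
  | bel : CForm → CForm → CForm

/-- The single-agent language L_QP: `φ ::= ⊤ | p | ¬φ | (φ∧φ) | φ ≽ φ`. -/
inductive QForm : Type
  | top : QForm
  | atom : Fin 2 → QForm
  | neg : QForm → QForm
  | and : QForm → QForm → QForm
  | ge : QForm → QForm → QForm

/-- The worlds of the comparison models: `W = 𝒫({p,q})`. -/
abbrev Wld : Type := Set (Fin 2)

/-- The `⊨_1` semantics of L_CN on a comparison model `(W, ⪰, V)`:
`B(α,β)` holds iff `⟦α∧β⟧ ⪰ ⟦α∧¬β⟧`. -/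
def ctruth (ge : Set Wld → Set Wld → Prop) (V : Fin 2 → Set Wld) : CForm → Wld → Prop
  | .top, _ => True
  | .atom p, w => w ∈ V p
  | .neg φ, w => ¬ ctruth ge V φ w
  | .and φ ψ, w => ctruth ge V φ w ∧ ctruth ge V ψ w
  | .bel φ ψ, _ =>
      ge {v | ctruth ge V φ v ∧ ctruth ge V ψ v} {v | ctruth ge V φ v ∧ ¬ ctruth ge V ψ v}

/-- The `⊨_2` semantics of L_QP on a comparison model `(W, ⪰, V)`:
`α ≽ β` holds iff `⟦α⟧ ⪰ ⟦β⟧`. -/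
def qtruth (ge : Set Wld → Set Wld → Prop) (V : Fin 2 → Set Wld) : QForm → Wld → Prop
  | .top, _ => True
  | .atom p, w => w ∈ V p
  | .neg φ, w => ¬ qtruth ge V φ w
  | .and φ ψ, w => qtruth ge V φ w ∧ qtruth ge V ψ w
  | .ge α β, _ => ge {v | qtruth ge V α v} {v | qtruth ge V β v}

/-- The valuation: `V(r) = {w ∈ W | r ∈ w}`. -/
def V18 : Fin 2 → Set Wld := fun r => {w | r ∈ w}

/-- `⪰_1` relates `{{p},{p,q}} ⪰ {{q},{p,q}}` (i.e. `⟦p⟧ ⪰ ⟦q⟧`) and `{{p}} ⪰ {{q}}`. -/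
def ge1 : Set Wld → Set Wld → Prop := fun A B =>
  (A = {w | (0 : Fin 2) ∈ w} ∧ B = {w | (1 : Fin 2) ∈ w}) ∨
  (A = {({0} : Wld)} ∧ B = {({1} : Wld)})

/-- `⪰_2` relates only `{{p}} ⪰ {{q}}`. -/
def ge2 : Set Wld → Set Wld → Prop := fun A B =>
  A = {({0} : Wld)} ∧ B = {({1} : Wld)}

theorem ctruth_congr_of_disjoint {ge ge' : Set Wld → Set Wld → Prop} (V : Fin 2 → Set Wld)
    (h : ∀ A B, Disjoint A B → (ge A B ↔ ge' A B)) (φ : CForm) (w : Wld) :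
    ctruth ge V φ w ↔ ctruth ge' V φ w := by
  induction φ generalizing w with
  | top => rfl
  | atom p => rfl
  | neg φ ih => exact not_congr (ih w)
  | and φ ψ ihφ ihψ => exact and_congr (ihφ w) (ihψ w)
  | bel φ ψ ihφ ihψ =>
    have hφ : ctruth ge V φ = ctruth ge' V φ := funext fun v => propext (ihφ v)
    have hψ : ctruth ge V ψ = ctruth ge' V ψ := funext fun v => propext (ihψ v)
    simp only [ctruth]
    rw [hφ, hψ]
    exact h _ _ (Set.disjoint_left.2 fun _ hpos hneg => hneg.2 hpos.2)

theorem ge1_iff_ge2_of_disjoint {A B : Set Wld} (h : Disjoint A B) : ge1 A B ↔ ge2 A B := by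
  refine ⟨?_, Or.inr⟩
  rintro (⟨rfl, rfl⟩ | h2)
  · exact absurd h (Set.not_disjoint_iff.2 ⟨Set.univ, trivial, trivial⟩)
  · exact h2

theorem not_ge2_atoms : ¬ ge2 (V18 0) (V18 1) := by
  rintro ⟨hp, -⟩
  have huniv : Set.univ ∈ V18 0 := trivial
  rw [hp, Set.mem_singleton_iff] at huniv
  have h1 : (1 : Fin 2) ∈ ({0} : Wld) := huniv ▸ Set.mem_univ 1
  simp at h1

/-- L_QP is strictly more expressive than L_CN on comparison models:
the comparison models `N1 = (W, ⪰_1, V)` and `N2 = (W, ⪰_2, V)` satisfy the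
same L_CN formulas at every world, but the L_QP formula `p ≽ q` is true
everywhere on `N1` and false everywhere on `N2`. -/
theorem qp_more_expressive_than_cn :
    (∀ (φ : CForm) (w : Wld), ctruth ge1 V18 φ w ↔ ctruth ge2 V18 φ w) ∧
    (∀ w : Wld, qtruth ge1 V18 (.ge (.atom 0) (.atom 1)) w) ∧
    (∀ w : Wld, ¬ qtruth ge2 V18 (.ge (.atom 0) (.atom 1)) w) :=
  ⟨ctruth_congr_of_disjoint V18 fun _ _ => ge1_iff_ge2_of_disjoint,
    fun _ => Or.inl ⟨rfl, rfl⟩, fun _ => not_ge2_atoms⟩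
end
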